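/- Let q and r be squarefree positive integers with d = gcd(q, r). Then in the group algebra ℚ[ℚ/ℤ], F_q · F_r = φ(d) · ∑_{e | d} (∏_{p | e} (p−2)/(p−1)) · F_{qre/d²}, where the product is over primes p dividing e. -/

import Mathlib

/-! `F n` is the sum of the points of exact order `n` in `ℚ/ℤ`. For coprime `m, n`, addition is a
bijection from (points of order `m`) × (points of order `n`) onto the points of order `mn`: it is
injective because a difference killed by both `m` and `n` is zero, and both sides have
`φ m * φ n = φ (m n)` elements. Hence `F` is multiplicative on coprime arguments.

For a prime `p`, `1 + F p` is the sum over the subgroup of order `p`, which is invariant under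
translation by that subgroup, so `(1 + F p)² = p (1 + F p)`, i.e.
`F p² = (p - 1) (1 + c_p F p)` with `c_p = (p - 2)/(p - 1)`. For squarefree `d`, multiplying these
over `p ∣ d` and expanding over subsets of primes gives `F d² = φ d ∑_{e ∣ d} (∏_{p ∣ e} c_p) F e`.
Finally `q = d q'`, `r = d r'` with `d, q', r'` pairwise coprime, so `F q F r = F (q' r') F d²`. -/

noncomputable def F (n : ℕ) : AddMonoidAlgebra ℚ (AddCircle (1 : ℚ)) :=
  ∑ a ∈ (Finset.range n).filter (fun a => Nat.Coprime a n),
    AddMonoidAlgebra.single (((a : ℚ) / n : ℚ) : AddCircle (1 : ℚ)) 1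

open Finset AddMonoidAlgebra

section GroupAlgebra

variable {k G : Type*} [Semiring k] [AddCommGroup G]

lemma sum_single_mul_sum_single_of_injOn [DecidableEq G] {s t : Finset G}
    (h : Set.InjOn (fun x : G × G => x.1 + x.2) ↑(s ×ˢ t)) :
    (∑ x ∈ s, single x (1 : k)) * ∑ y ∈ t, single y 1
      = ∑ z ∈ (s ×ˢ t).image (fun x => x.1 + x.2), single z 1 := by
  rw [sum_mul_sum, ← sum_product', sum_image h]
  simp only [single_mul_single, mul_one]

lemma sum_single_mul_self_of_addClosed {s : Finset G}
    (hadd : ∀ x ∈ s, ∀ y ∈ s, x + y ∈ s) (hsub : ∀ x ∈ s, ∀ y ∈ s, x - y ∈ s) :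
    (∑ x ∈ s, single x (1 : k)) * ∑ x ∈ s, single x 1
      = #s • ∑ x ∈ s, single x (1 : k) := by
  have translate (y : G) (hy : y ∈ s) :
      (∑ x ∈ s, single x (1 : k)) * single y 1 = ∑ x ∈ s, single x 1 := by
    simp only [sum_mul, single_mul_single, mul_one]
    exact sum_nbij' (· + y) (· - y) (fun x hx => hadd x hx y hy) (fun x hx => hsub x hx y hy)
      (fun x _ => add_sub_cancel_right x y) (fun x _ => sub_add_cancel x y) (fun _ _ => rfl)
  rw [mul_sum, sum_congr rfl translate, sum_const]

end GroupAlgebra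

lemma add_injOn_of_coprime {G : Type*} [AddCommGroup G] {m n : ℕ} (hmn : m.Coprime n) :
    Set.InjOn (fun x : G × G => x.1 + x.2) ({x | m • x = 0} ×ˢ {y | n • y = 0}) := by
  rintro ⟨x, y⟩ ⟨hx, hy⟩ ⟨x', y'⟩ ⟨hx', hy'⟩ h
  simp only [Set.mem_ofPred_eq] at hx hy hx' hy' h
  have hw : x - x' = y' - y := by rw [sub_eq_sub_iff_add_eq_add, h, add_comm]
  have hm : addOrderOf (x - x') ∣ m :=
    addOrderOf_dvd_of_nsmul_eq_zero (by rw [nsmul_sub, hx, hx', sub_zero])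
  have hn : addOrderOf (x - x') ∣ n :=
    addOrderOf_dvd_of_nsmul_eq_zero (by rw [hw, nsmul_sub, hy, hy', sub_zero])
  have hxx' : x = x' := sub_eq_zero.1 <|
    AddMonoid.addOrderOf_eq_one_iff.1 (Nat.eq_one_of_dvd_coprimes hmn hm hn)
  subst hxx'
  exact Prod.ext rfl (add_left_cancel h)

noncomputable def pointsOfOrder (n : ℕ) : Finset (AddCircle (1 : ℚ)) :=
  ((range n).filter (fun a => Nat.Coprime a n)).image
    fun a : ℕ => (((a : ℚ) / n : ℚ) : AddCircle (1 : ℚ))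

lemma coe_natCast_div_injOn (n : ℕ) :
    Set.InjOn (fun a : ℕ => (((a : ℚ) / n : ℚ) : AddCircle (1 : ℚ))) (range n) := by
  rcases n.eq_zero_or_pos with rfl | hn
  · simp
  have nsmul_eq (a : ℕ) :
      (((a : ℚ) / n : ℚ) : AddCircle (1 : ℚ)) = a • ((1 / n : ℚ) : AddCircle (1 : ℚ)) := by
    simpa using AddCircle.natCast_div_mul_eq_nsmul (p := (1 : ℚ)) (q := (n : ℚ)) 1 a
  intro a ha b hb hab
  simp only [nsmul_eq] at hab
  refine nsmul_injOn_Iio_addOrderOf ?_ ?_ hab <;>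
    rw [Set.mem_Iio, AddCircle.addOrderOf_period_div hn]
  exacts [mem_range.1 ha, mem_range.1 hb]

lemma mem_pointsOfOrder {n : ℕ} (hn : 0 < n) {x : AddCircle (1 : ℚ)} :
    x ∈ pointsOfOrder n ↔ addOrderOf x = n := by
  rw [AddCircle.addOrderOf_eq_pos_iff hn]
  simp [pointsOfOrder, Nat.coprime_iff_gcd_eq_one, and_assoc]

lemma card_pointsOfOrder (n : ℕ) : #(pointsOfOrder n) = n.totient := by
  rw [pointsOfOrder,
    card_image_of_injOn ((coe_natCast_div_injOn n).mono (coe_subset.2 (filter_subset _ _))),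
    Nat.totient_eq_card_coprime]
  simp only [Nat.coprime_comm]

lemma F_eq_sum_pointsOfOrder (n : ℕ) : F n = ∑ x ∈ pointsOfOrder n, single x 1 := by
  rw [F, pointsOfOrder,
    sum_image ((coe_natCast_div_injOn n).mono (coe_subset.2 (filter_subset _ _)))]

lemma nsmul_eq_zero_of_mem_pointsOfOrder {n : ℕ} (hn : 0 < n) {x : AddCircle (1 : ℚ)}
    (hx : x ∈ pointsOfOrder n) : n • x = 0 :=
  (mem_pointsOfOrder hn).1 hx ▸ addOrderOf_nsmul_eq_zero x

lemma add_injOn_pointsOfOrder {m n : ℕ} (hm : 0 < m) (hn : 0 < n) (hmn : m.Coprime n) :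
    Set.InjOn (fun x : AddCircle (1 : ℚ) × AddCircle (1 : ℚ) => x.1 + x.2)
      ↑(pointsOfOrder m ×ˢ pointsOfOrder n) := by
  rw [coe_product]
  exact (add_injOn_of_coprime hmn).mono <| Set.prod_mono
    (fun _ => nsmul_eq_zero_of_mem_pointsOfOrder hm)
    (fun _ => nsmul_eq_zero_of_mem_pointsOfOrder hn)

lemma image_add_pointsOfOrder {m n : ℕ} (hm : 0 < m) (hn : 0 < n) (hmn : m.Coprime n) :
    (pointsOfOrder m ×ˢ pointsOfOrder n).image (fun x => x.1 + x.2) = pointsOfOrder (m * n) := by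
  refine eq_of_subset_of_card_le ?_ ?_
  · simp only [subset_iff, mem_image, mem_product, Prod.exists]
    rintro _ ⟨x, y, ⟨hx, hy⟩, rfl⟩
    rw [mem_pointsOfOrder hm] at hx
    rw [mem_pointsOfOrder hn] at hy
    rw [mem_pointsOfOrder (Nat.mul_pos hm hn),
      (AddCommute.all x y).addOrderOf_add_eq_mul_addOrderOf_of_coprime (hx ▸ hy ▸ hmn), hx, hy]
  · rw [card_image_of_injOn (add_injOn_pointsOfOrder hm hn hmn), card_product, card_pointsOfOrder,
      card_pointsOfOrder, card_pointsOfOrder, Nat.totient_mul hmn]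

lemma F_mul_of_coprime {m n : ℕ} (hm : 0 < m) (hn : 0 < n) (hmn : m.Coprime n) :
    F m * F n = F (m * n) := by
  rw [F_eq_sum_pointsOfOrder, F_eq_sum_pointsOfOrder, F_eq_sum_pointsOfOrder,
    sum_single_mul_sum_single_of_injOn (add_injOn_pointsOfOrder hm hn hmn),
    image_add_pointsOfOrder hm hn hmn]

lemma mem_insert_zero_pointsOfOrder {p : ℕ} (hp : p.Prime) {x : AddCircle (1 : ℚ)} :
    x ∈ insert 0 (pointsOfOrder p) ↔ p • x = 0 := by
  rw [mem_insert, mem_pointsOfOrder hp.pos, ← addOrderOf_dvd_iff_nsmul_eq_zero, Nat.dvd_prime hp,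
    AddMonoid.addOrderOf_eq_one_iff]

lemma F_prime_mul_self {p : ℕ} (hp : p.Prime) :
    F p * F p
      = ((p : ℚ) - 1) • (1 : AddMonoidAlgebra ℚ (AddCircle (1 : ℚ))) + ((p : ℚ) - 2) • F p := by
  have h0 : 0 ∉ pointsOfOrder p := by
    rw [mem_pointsOfOrder hp.pos, addOrderOf_zero]
    exact hp.one_lt.ne
  have hsum : ∑ x ∈ insert 0 (pointsOfOrder p), single x (1 : ℚ) = 1 + F p := by
    rw [sum_insert h0, F_eq_sum_pointsOfOrder, one_def]
  have hcard : #(insert 0 (pointsOfOrder p)) = p := by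
    rw [card_insert_of_notMem h0, card_pointsOfOrder, Nat.totient_prime hp,
      Nat.sub_add_cancel hp.one_le]
  have hsq := sum_single_mul_self_of_addClosed (k := ℚ) (s := insert 0 (pointsOfOrder p))
    (fun x hx y hy => by
      rw [mem_insert_zero_pointsOfOrder hp] at *
      rw [nsmul_add, hx, hy, add_zero])
    (fun x hx y hy => by
      rw [mem_insert_zero_pointsOfOrder hp] at *
      rw [nsmul_sub, hx, hy, sub_zero])
  rw [hsum, hcard, nsmul_eq_mul] at hsq
  simp only [Algebra.smul_def, map_sub, map_natCast, map_ofNat, map_one]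
  linear_combination hsq

lemma F_one : F 1 = 1 := by
  simp [F, one_def]

lemma F_prod_of_prime {t : Finset ℕ} (ht : ∀ p ∈ t, p.Prime) :
    F (∏ p ∈ t, p) = ∏ p ∈ t, F p := by
  induction t using Finset.induction_on with
  | empty => rw [prod_empty, prod_empty, F_one]
  | insert p t hpt ih =>
    have hp := ht p (mem_insert_self p t)
    have ht' : ∀ q ∈ t, q.Prime := fun q hq => ht q (mem_insert_of_mem hq)
    have hcop : p.Coprime (∏ q ∈ t, q) := Nat.Coprime.prod_right fun q hq =>
      (Nat.coprime_primes hp (ht' q hq)).2 (ne_of_mem_of_not_mem hq hpt).symm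
    rw [prod_insert hpt, prod_insert hpt, ← ih ht',
      F_mul_of_coprime hp.pos (prod_pos fun q hq => (ht' q hq).pos) hcop]

lemma Nat.totient_eq_prod_primeFactors_of_squarefree {d : ℕ} (hd : Squarefree d) :
    (d.totient : ℚ) = ∏ p ∈ d.primeFactors, ((p : ℚ) - 1) := by
  rw [Nat.totient_eq_div_primeFactors_mul, Nat.prod_primeFactors_of_squarefree hd,
    Nat.div_self (Nat.pos_of_ne_zero hd.ne_zero), one_mul, Nat.cast_prod]
  exact prod_congr rfl fun p hp => Nat.cast_pred (Nat.pos_of_mem_primeFactors hp)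

lemma Nat.sum_powerset_primeFactors_eq_sum_divisors {M : Type*} [AddCommMonoid M] {d : ℕ}
    (hd : Squarefree d) (f : ℕ → M) :
    ∑ t ∈ d.primeFactors.powerset, f (∏ p ∈ t, p) = ∑ e ∈ d.divisors, f e := by
  refine sum_nbij' (fun t => ∏ p ∈ t, p) Nat.primeFactors ?_ ?_ ?_ ?_ fun _ _ => rfl
  · intro t ht
    rw [mem_powerset] at ht
    rw [Nat.mem_divisors]
    refine ⟨?_, hd.ne_zero⟩
    simpa only [id, Nat.prod_primeFactors_of_squarefree hd] using
      prod_dvd_prod_of_subset _ _ id ht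
  · intro e he
    rw [Nat.mem_divisors] at he
    rw [mem_powerset]
    exact Nat.primeFactors_mono he.1 he.2
  · intro t ht
    rw [mem_powerset] at ht
    exact Nat.primeFactors_prod fun p hp => Nat.prime_of_mem_primeFactors (ht hp)
  · intro e he
    rw [Nat.mem_divisors] at he
    exact Nat.prod_primeFactors_of_squarefree (hd.squarefree_of_dvd he.1)

lemma F_mul_self_of_squarefree {d : ℕ} (hd : Squarefree d) :
    F d * F d = (d.totient : ℚ) •
      ∑ e ∈ d.divisors, (∏ p ∈ e.primeFactors, ((p : ℚ) - 2) / ((p : ℚ) - 1)) • F e := by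
  set c : ℕ → ℚ := fun p => ((p : ℚ) - 2) / ((p : ℚ) - 1)
  have hprime : ∀ p ∈ d.primeFactors, F p * F p = ((p : ℚ) - 1) • (1 + c p • F p) := by
    intro p hp
    have hp1 : (p : ℚ) - 1 ≠ 0 := by
      have := (Nat.prime_of_mem_primeFactors hp).two_le
      rw [sub_ne_zero]
      exact_mod_cast (by omega : p ≠ 1)
    rw [F_prime_mul_self (Nat.prime_of_mem_primeFactors hp), smul_add, smul_smul,
      mul_div_cancel₀ _ hp1]
  calc F d * F d = ∏ p ∈ d.primeFactors, F p * F p := by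
        conv_lhs => rw [← Nat.prod_primeFactors_of_squarefree hd]
        rw [F_prod_of_prime fun p => Nat.prime_of_mem_primeFactors, ← prod_mul_distrib]
    _ = (d.totient : ℚ) • ∏ p ∈ d.primeFactors, (1 + c p • F p) := by
        rw [prod_congr rfl hprime, prod_smul, Nat.totient_eq_prod_primeFactors_of_squarefree hd]
    _ = (d.totient : ℚ) • ∑ e ∈ d.divisors, (∏ p ∈ e.primeFactors, c p) • F e := by
        rw [prod_one_add, ← Nat.sum_powerset_primeFactors_eq_sum_divisors hd]
        refine congrArg _ (sum_congr rfl fun t ht => ?_)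
        have ht' : ∀ p ∈ t, p.Prime := fun p hp =>
          Nat.prime_of_mem_primeFactors (mem_powerset.1 ht hp)
        rw [Nat.primeFactors_prod ht', F_prod_of_prime ht', prod_smul]

theorem stmt_6_general (q r : ℕ)
    (hqs : Squarefree q) (hrs : Squarefree r) :
    F q * F r
      = (Nat.totient (Nat.gcd q r) : ℚ) •
          ∑ e ∈ (Nat.gcd q r).divisors,
            (∏ p ∈ e.primeFactors, ((p : ℚ) - 2) / ((p : ℚ) - 1)) •
              F (q * r * e / (Nat.gcd q r) ^ 2) := by
  have hds : Squarefree (q.gcd r) := hqs.squarefree_of_dvd (Nat.gcd_dvd_left q r)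
  generalize hgcd : q.gcd r = d at hds ⊢
  obtain ⟨q', rfl⟩ : d ∣ q := hgcd ▸ Nat.gcd_dvd_left q r
  obtain ⟨r', rfl⟩ : d ∣ r := hgcd ▸ Nat.gcd_dvd_right _ r
  have hd : 0 < d := Nat.pos_of_ne_zero hds.ne_zero
  have hq' : 0 < q' := Nat.pos_of_ne_zero (right_ne_zero_of_mul hqs.ne_zero)
  have hr' : 0 < r' := Nat.pos_of_ne_zero (right_ne_zero_of_mul hrs.ne_zero)
  have hdq' : d.Coprime q' := Nat.coprime_of_squarefree_mul hqs
  have hdr' : d.Coprime r' := Nat.coprime_of_squarefree_mul hrs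
  have hq'r' : q'.Coprime r' := by
    rw [Nat.gcd_mul_left] at hgcd
    exact (Nat.mul_eq_left hd.ne').1 hgcd
  have hFqr : F (d * q') * F (d * r') = F (q' * r') * (F d * F d) := by
    rw [← F_mul_of_coprime hd hq' hdq', ← F_mul_of_coprime hd hr' hdr',
      ← F_mul_of_coprime hq' hr' hq'r']
    ring
  rw [hFqr, F_mul_self_of_squarefree hds, mul_smul_comm, mul_sum]
  refine congrArg _ (sum_congr rfl fun e he => ?_)
  have he : e ∣ d := Nat.dvd_of_mem_divisors he
  have hcop : (q' * r').Coprime e :=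
    Nat.Coprime.mul_left (hdq'.symm.coprime_dvd_right he) (hdr'.symm.coprime_dvd_right he)
  rw [mul_smul_comm, F_mul_of_coprime (Nat.mul_pos hq' hr') (Nat.pos_of_dvd_of_pos he hd) hcop,
    show d * q' * (d * r') * e = d ^ 2 * (q' * r' * e) by ring,
    Nat.mul_div_cancel_left _ (pow_pos hd 2)]

theorem stmt_6 (q r : ℕ) (hq : 0 < q) (hr : 0 < r)
    (hqs : Squarefree q) (hrs : Squarefree r) :
    F q * F r
      = (Nat.totient (Nat.gcd q r) : ℚ) •
          ∑ e ∈ (Nat.gcd q r).divisors,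
            (∏ p ∈ e.primeFactors, ((p : ℚ) - 2) / ((p : ℚ) - 1)) •
              F (q * r * e / (Nat.gcd q r) ^ 2) :=
  stmt_6_general q r hqs hrs
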